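/- There exists γ₀ ∈ (0,1] such that the following holds. Let X be a uniformly convex real Banach space, let C be a nonempty compact convex subset of X, let l ∈ ℕ with l ≥ 2, let γ ∈ (0, γ₀] and μ ∈ [0,1/2] with 2μ ≤ γ, and let T₁, T₂, …, T_l : C → C be pairwise commuting mappings each satisfying condition B_{γ,μ} on C. Fix λ ∈ (0,1) and a sequence {α_n} in [0, 1/2] with liminf_{n→∞} α_n = 0, limsup_{n→∞} α_n > 0, and lim_{n→∞}(α_{n+1} − α_n) = 0. For x₀ ∈ C define {x_n} by x_{n+1} = λ(1 − Σ_{k=1}^{l−1} α_n^k) T₁ x_n + λ Σ_{k=2}^{l} α_n^{k−1} T_k x_n + (1 − λ) x_n for n ≥ 0. Then {x_n} converges strongly (in norm) to a point z ∈ C with T_k z = z for all k = 1, …, l. -/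

import Mathlib

/-!
Condition `B_{γ,μ}` with `γ ≤ 1/2` gives the key inequality `‖x - T y‖ ≤ 5 ‖x - T x‖ + ‖x - y‖`:
each `T k` is quasi-nonexpansive, and a limit of approximate fixed points is a fixed point.
Picard iterates of such a map are asymptotically regular in a uniformly convex space: the
displacements decrease, and if they stayed above some `δ > 0`, uniform convexity would force
consecutive steps to align, so the orbit would be unbounded. By compactness each `T k` has a fixed
point, and since the maps commute they have a common fixed point `p`.

The iteration is Fejér monotone with respect to common fixed points, and by uniform convexity a
step in which `T k` has weight `≥ κ` and moves `x n` by `≥ ε` decreases `‖x n - p‖` by a fixed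
amount. When `α n` is close to its `limsup`, all weights are bounded below, so along those times
the `x n` cluster at a common fixed point, to which the whole sequence then converges.
-/

open Filter Set Topology

universe u

theorem Antitone.tendsto_sub_succ {R : ℕ → ℝ} (h : Antitone R) (hb : BddBelow (range R)) :
    Tendsto (fun n => R n - R (n + 1)) atTop (𝓝 0) := by
  have hR := tendsto_atTop_ciInf h hb
  simpa using hR.sub (hR.comp (tendsto_add_atTop_nat 1))

theorem Antitone.eventually_not_of_le_sub {R : ℕ → ℝ} (h : Antitone R)
    (hb : BddBelow (range R)) {d : ℝ} (hd : 0 < d) {P : ℕ → Prop}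
    (hP : ∀ n, P n → R (n + 1) ≤ R n - d) : ∀ᶠ n in atTop, ¬ P n := by
  filter_upwards [(h.tendsto_sub_succ hb).eventually (gt_mem_nhds hd)] with n hn hPn
  linarith [hP n hPn]

section Normed

variable {E : Type*} [NormedAddCommGroup E]

theorem tendsto_of_antitone_norm_sub {x : ℕ → E} {z : E} (h : Antitone fun n => ‖x n - z‖)
    {θ : ℕ → ℕ} (hθ : Tendsto θ atTop atTop) (hlim : Tendsto (x ∘ θ) atTop (𝓝 z)) :
    Tendsto x atTop (𝓝 z) := by
  have hinf := tendsto_atTop_ciInf h ⟨0, by rintro _ ⟨n, rfl⟩; exact norm_nonneg _⟩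
  rw [tendsto_nhds_unique (hinf.comp hθ) (tendsto_iff_norm_sub_tendsto_zero.1 hlim)] at hinf
  exact tendsto_iff_norm_sub_tendsto_zero.2 hinf

variable [NormedSpace ℝ E]

theorem exists_forall_norm_add_le_two_sub_mul [UniformConvexSpace E] {ε : ℝ} (hε : 0 < ε)
    (M : ℝ) : ∃ δ, 0 < δ ∧ ∀ ⦃R : ℝ⦄, R ≤ M → ∀ ⦃a b : E⦄, ‖a‖ ≤ R → ‖b‖ ≤ R →
      ε ≤ ‖a - b‖ → ‖a + b‖ ≤ (2 - δ) * R := by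
  set M' := max M 1
  have hM' : 0 < M' := lt_max_of_lt_right one_pos
  obtain ⟨δ, hδ, h⟩ := exists_forall_closed_ball_dist_add_le_two_sub E (div_pos hε hM')
  refine ⟨δ, hδ, fun R hRM a b ha hb hab => ?_⟩
  have hR : 0 < R := by linarith [norm_sub_le a b]
  have hscale : ∀ v : E, ‖R⁻¹ • v‖ = ‖v‖ / R := fun v => by
    rw [norm_smul_of_nonneg (inv_nonneg.2 hR.le), inv_mul_eq_div]
  have key := h (x := R⁻¹ • a) (y := R⁻¹ • b)
  simp only [← smul_add, ← smul_sub, hscale, div_le_one hR, le_div_iff₀ hR,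
    div_le_iff₀ hR] at key
  refine key ha hb (le_trans ?_ hab)
  rw [div_mul_eq_mul_div, div_le_iff₀ hM']
  gcongr
  exact hRM.trans (le_max_left M 1)

theorem norm_smul_add_smul_le {a b : E} {R δ s t m : ℝ} (ha : ‖a‖ ≤ R) (hb : ‖b‖ ≤ R)
    (hab : ‖a + b‖ ≤ (2 - δ) * R) (hm : 0 ≤ m) (hms : m ≤ s) (hmt : m ≤ t) :
    ‖s • a + t • b‖ ≤ (s + t - m * δ) * R := by
  have hsplit : s • a + t • b = m • (a + b) + (s - m) • a + (t - m) • b := by module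
  rw [hsplit]
  calc ‖m • (a + b) + (s - m) • a + (t - m) • b‖
      ≤ m * ‖a + b‖ + (s - m) * ‖a‖ + (t - m) * ‖b‖ := by
        refine (norm_add₃_le).trans ?_
        simp only [norm_smul_of_nonneg hm, norm_smul_of_nonneg (sub_nonneg.2 hms),
          norm_smul_of_nonneg (sub_nonneg.2 hmt), le_refl]
    _ ≤ m * ((2 - δ) * R) + (s - m) * R + (t - m) * R := by
        gcongr
    _ = (s + t - m * δ) * R := by ring

/-- If the steps `y n - y (n+1)` vary slowly, `y (n + k) - y n` is roughly `k` times a step,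
so a bounded sequence cannot have steps bounded away from zero. -/
theorem exists_norm_sub_succ_lt {y : ℕ → E} (hy : Bornology.IsBounded (range y))
    (h : Tendsto (fun n => (y n - y (n + 1)) - (y (n + 1) - y (n + 2))) atTop (𝓝 0))
    {δ : ℝ} (hδ : 0 < δ) : ∃ n, ‖y n - y (n + 1)‖ < δ := by
  by_contra! hlow
  set w : ℕ → E := fun n => y n - y (n + 1) with hw
  obtain ⟨D, hD⟩ := Metric.isBounded_iff.1 hy
  obtain ⟨k, hk⟩ := exists_nat_gt ((D + 1) / δ)
  have hdrift : ∀ i, Tendsto (fun n => w (n + i) - w n) atTop (𝓝 0) := by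
    intro i
    induction i with
    | zero => simp
    | succ i ih =>
      have hstep := h.comp (tendsto_add_atTop_nat i)
      convert ih.sub hstep using 1
      · ext n; simp only [hw, Function.comp_apply]; ring_nf; abel
      · simp
  have hsum : Tendsto (fun n => ∑ i ∈ Finset.range k, (w (n + i) - w n)) atTop (𝓝 0) := by
    simpa using tendsto_finsetSum (Finset.range k) fun i _ => hdrift i
  obtain ⟨n, hn⟩ := (hsum.norm.eventually (gt_mem_nhds (by norm_num : ‖(0 : E)‖ < 1))).exists
  have htele : (k : ℝ) • w n = (y n - y (n + k)) - ∑ i ∈ Finset.range k, (w (n + i) - w n) := by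
    have hsumw : ∑ i ∈ Finset.range k, w (n + i) = y n - y (n + k) := by
      simpa [hw, add_assoc] using Finset.sum_range_sub' (fun i => y (n + i)) k
    rw [Finset.sum_sub_distrib, hsumw, Finset.sum_const, Finset.card_range,
      Nat.cast_smul_eq_nsmul]
    abel
  have hkw : (k : ℝ) * δ ≤ ‖(k : ℝ) • w n‖ := by
    rw [norm_smul, Real.norm_natCast]
    exact mul_le_mul_of_nonneg_left (hlow n) k.cast_nonneg
  have hyk : ‖y n - y (n + k)‖ ≤ D := by
    simpa [dist_eq_norm] using hD (mem_range_self n) (mem_range_self (n + k))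
  rw [div_lt_iff₀ hδ] at hk
  linarith [htele ▸ norm_sub_le (y n - y (n + k)) (∑ i ∈ Finset.range k, (w (n + i) - w n))]

end Normed

section Mann

variable {X : Type*} [NormedAddCommGroup X] [NormedSpace ℝ X] {ι : Type*} {s : Finset ι}
  {T : ι → X → X} {l : ℝ} {w : ι → ℝ} {C : Set X} {y z : X}

def mannStep (s : Finset ι) (T : ι → X → X) (l : ℝ) (w : ι → ℝ) (y : X) : X :=
  l • ∑ i ∈ s, w i • T i y + (1 - l) • y

theorem mannStep_mem (hC : Convex ℝ C) (hT : ∀ i ∈ s, MapsTo (T i) C C)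
    (hw₀ : ∀ i ∈ s, 0 ≤ w i) (hw₁ : ∑ i ∈ s, w i = 1) (hl₀ : 0 ≤ l) (hl₁ : l ≤ 1) (hy : y ∈ C) :
    mannStep s T l w y ∈ C :=
  hC (hC.sum_mem hw₀ hw₁ fun i hi => hT i hi hy) hy hl₀ (sub_nonneg.2 hl₁) (by ring)

theorem mannStep_sub (hw₁ : ∑ i ∈ s, w i = 1) :
    mannStep s T l w y - z = ∑ i ∈ s, (l * w i) • (T i y - z) + (1 - l) • (y - z) := by
  have hz : z = ∑ i ∈ s, (l * w i) • z + (1 - l) • z := by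
    rw [← Finset.sum_smul, ← Finset.mul_sum, hw₁]; module
  conv_lhs => rw [hz]
  simp only [mannStep, Finset.smul_sum, smul_smul, smul_sub, Finset.sum_sub_distrib]
  abel

theorem norm_sum_smul_le {t : Finset ι} {c : ι → ℝ} {v : ι → X} {R : ℝ}
    (hc : ∀ i ∈ t, 0 ≤ c i) (hv : ∀ i ∈ t, ‖v i‖ ≤ R) :
    ‖∑ i ∈ t, c i • v i‖ ≤ (∑ i ∈ t, c i) * R := by
  rw [Finset.sum_mul]
  exact norm_sum_le_of_le t fun i hi => by
    rw [norm_smul_of_nonneg (hc i hi)]; exact mul_le_mul_of_nonneg_left (hv i hi) (hc i hi)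

theorem norm_mannStep_sub_le (hw₀ : ∀ i ∈ s, 0 ≤ w i) (hw₁ : ∑ i ∈ s, w i = 1) (hl₀ : 0 ≤ l)
    (hl₁ : l ≤ 1) (hT : ∀ i ∈ s, ‖T i y - z‖ ≤ ‖y - z‖) : ‖mannStep s T l w y - z‖ ≤ ‖y - z‖ := by
  have hsum := norm_sum_smul_le (fun i hi => mul_nonneg hl₀ (hw₀ i hi)) hT
  rw [← Finset.mul_sum, hw₁, mul_one] at hsum
  rw [mannStep_sub hw₁]
  refine (norm_add_le _ _).trans ?_
  rw [norm_smul_of_nonneg (sub_nonneg.2 hl₁)]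
  linarith

theorem norm_mannStep_sub_le_of_norm_add_le {k : ι} (hk : k ∈ s) (hw₀ : ∀ i ∈ s, 0 ≤ w i)
    (hw₁ : ∑ i ∈ s, w i = 1) (hl₀ : 0 ≤ l) {R η m : ℝ} (hT : ∀ i ∈ s, ‖T i y - z‖ ≤ R)
    (hy : ‖y - z‖ ≤ R) (hη : ‖(T k y - z) + (y - z)‖ ≤ (2 - η) * R) (hm : 0 ≤ m)
    (hmk : m ≤ l * w k) (hml : m ≤ 1 - l) : ‖mannStep s T l w y - z‖ ≤ (1 - m * η) * R := by
  classical
  have hpair := norm_smul_add_smul_le (hT k hk) hy hη hm hmk hml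
  have hrest := norm_sum_smul_le (t := s.erase k) (fun i hi => mul_nonneg hl₀
    (hw₀ i (Finset.mem_of_mem_erase hi))) fun i hi => hT i (Finset.mem_of_mem_erase hi)
  have hsum : ∑ i ∈ s.erase k, l * w i = l - l * w k := by
    rw [eq_sub_iff_add_eq', Finset.add_sum_erase s (fun i => l * w i) hk, ← Finset.mul_sum, hw₁,
      mul_one]
  rw [hsum] at hrest
  rw [mannStep_sub hw₁, ← Finset.add_sum_erase s _ hk, add_right_comm]
  refine (norm_add_le _ _).trans ?_
  linarith

/-- Along times where `T k` carries weight at least `κ`, a step displacing `x n` by `ε` under `T k`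
makes `‖x n - z‖ drop by a fixed amount (uniform convexity, with `ε ≤ 2 ‖x n - z‖`), which can
happen only finitely often. -/
theorem tendsto_norm_apply_sub_of_le_weight [UniformConvexSpace X] {W : ℕ → ι → ℝ} {x : ℕ → X}
    (hx : ∀ n, x (n + 1) = mannStep s T l (W n) (x n)) (hW₀ : ∀ n, ∀ i ∈ s, 0 ≤ W n i)
    (hW₁ : ∀ n, ∑ i ∈ s, W n i = 1) (hl₀ : 0 < l) (hl₁ : l < 1)
    (hz : ∀ n, ∀ i ∈ s, ‖T i (x n) - z‖ ≤ ‖x n - z‖) {k : ι} (hk : k ∈ s) {κ : ℝ} (hκ : 0 < κ)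
    {θ : ℕ → ℕ} (hθ : Tendsto θ atTop atTop) (hθκ : ∀ j, κ ≤ W (θ j) k) :
    Tendsto (fun j => ‖T k (x (θ j)) - x (θ j)‖) atTop (𝓝 0) := by
  set R : ℕ → ℝ := fun n => ‖x n - z‖ with hR
  have hanti : Antitone R := antitone_nat_of_succ_le fun n => by
    simpa only [hR, hx n] using norm_mannStep_sub_le (hW₀ n) (hW₁ n) hl₀.le hl₁.le (hz n)
  have hbdd : BddBelow (range R) := ⟨0, by rintro _ ⟨n, rfl⟩; exact norm_nonneg _⟩
  refine Metric.tendsto_nhds.2 fun ε hε => ?_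
  obtain ⟨η, hη, huc⟩ := exists_forall_norm_add_le_two_sub_mul (E := X) hε (R 0)
  set m := min (l * κ) (1 - l)
  have hm : 0 < m := lt_min (mul_pos hl₀ hκ) (sub_pos.2 hl₁)
  have hev := hanti.eventually_not_of_le_sub hbdd (d := m * η * (ε / 2)) (by positivity)
    (P := fun n => κ ≤ W n k ∧ ε ≤ ‖T k (x n) - x n‖) fun n ⟨hκn, hεn⟩ => by
      have hab : ε ≤ ‖(T k (x n) - z) - (x n - z)‖ := by rwa [sub_sub_sub_cancel_right]
      have hεR : ε ≤ 2 * R n := by linarith [norm_sub_le (T k (x n) - z) (x n - z), hz n k hk]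
      have hstep := norm_mannStep_sub_le_of_norm_add_le hk (hW₀ n) (hW₁ n) hl₀.le (hz n) le_rfl
        (huc (hanti (Nat.zero_le n)) (hz n k hk) le_rfl hab) hm.le
        ((min_le_left _ _).trans (mul_le_mul_of_nonneg_left hκn hl₀.le)) (min_le_right _ _)
      rw [← hx n] at hstep
      nlinarith [mul_pos hm hη]
  filter_upwards [hθ.eventually hev] with j hj
  rw [dist_zero_right, norm_norm]
  exact lt_of_not_ge fun h => hj ⟨hθκ j, h⟩

end Mann

section

variable {X : Type*} [NormedAddCommGroup X]

def ConditionB (γ μ : ℝ) (C : Set X) (T : X → X) : Prop :=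
  ∀ x ∈ C, ∀ y ∈ C, γ * ‖x - T x‖ ≤ ‖x - y‖ + μ * ‖y - T y‖ →
    ‖T x - T y‖ ≤ (1 - γ) * ‖x - y‖ + μ * (‖x - T y‖ + ‖y - T x‖)

namespace ConditionB

variable {γ μ : ℝ} {C D : Set X} {T : X → X} {x y : X}

theorem mono (hB : ConditionB γ μ C T) (hD : D ⊆ C) : ConditionB γ μ D T :=
  fun x hx y hy => hB x (hD hx) y (hD hy)

theorem norm_apply_sub_apply_apply_le (hB : ConditionB γ μ C T) (hT : MapsTo T C C)
    (hγ : γ ≤ 1) (hμ : 0 ≤ μ) (hμγ : 2 * μ ≤ γ) (hx : x ∈ C) :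
    ‖T x - T (T x)‖ ≤ ‖x - T x‖ := by
  have hpre : γ * ‖x - T x‖ ≤ ‖x - T x‖ + μ * ‖T x - T (T x)‖ := by
    nlinarith [norm_nonneg (x - T x), norm_nonneg (T x - T (T x))]
  have h := hB x hx (T x) (hT hx) hpre
  rw [sub_self, norm_zero, add_zero] at h
  nlinarith [mul_le_mul_of_nonneg_left (norm_sub_le_norm_sub_add_norm_sub x (T x) (T (T x))) hμ,
    mul_nonneg (sub_nonneg.2 hμγ) (norm_nonneg (x - T x))]

theorem norm_sub_apply_le_of_le (hB : ConditionB γ μ C T) (hμ : 0 ≤ μ) (hμγ : 2 * μ ≤ γ)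
    (hμ' : μ ≤ 1 / 2)
    (hx : x ∈ C) (hy : y ∈ C) (hxy : γ * ‖x - T x‖ ≤ ‖x - y‖ + μ * ‖y - T y‖) :
    ‖x - T y‖ ≤ 3 * ‖x - T x‖ + ‖x - y‖ := by
  have h := hB x hx y hy hxy
  have h₁ := norm_sub_le_norm_sub_add_norm_sub x (T x) (T y)
  have h₂ := norm_sub_le_norm_sub_add_norm_sub y x (T x)
  rw [norm_sub_rev y x] at h₂
  have hTxy : ‖T x - T y‖ ≤ ‖x - y‖ + 2 * ‖x - T x‖ := by
    nlinarith [mul_le_mul_of_nonneg_left h₁ hμ, mul_le_mul_of_nonneg_left h₂ hμ,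
      mul_nonneg (sub_nonneg.2 hμγ) (norm_nonneg (x - y)),
      mul_nonneg (by linarith : 0 ≤ 1 - 2 * μ) (norm_nonneg (x - T x))]
  linarith

/-- This is where `γ ≤ 1 / 2` is needed: if the premise of condition `B` failed both for `(x, y)`
and for `(T x, y)`, then `‖x - T x‖ < γ (‖x - T x‖ + ‖T x - T (T x)‖) ≤ 2 γ ‖x - T x‖`. -/
theorem norm_sub_apply_le (hB : ConditionB γ μ C T) (hT : MapsTo T C C) (hγ : γ ≤ 1 / 2)
    (hμ : 0 ≤ μ) (hμγ : 2 * μ ≤ γ) (hx : x ∈ C) (hy : y ∈ C) :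
    ‖x - T y‖ ≤ 5 * ‖x - T x‖ + ‖x - y‖ := by
  have hd := hB.norm_apply_sub_apply_apply_le hT (by linarith) hμ hμγ hx
  have h₁ := norm_sub_le_norm_sub_add_norm_sub x (T x) (T y)
  have h₂ := norm_sub_le_norm_sub_add_norm_sub (T x) x y
  rw [norm_sub_rev (T x) x] at h₂
  by_cases hxy : γ * ‖x - T x‖ ≤ ‖x - y‖ + μ * ‖y - T y‖
  · linarith [hB.norm_sub_apply_le_of_le hμ hμγ (by linarith) hx hy hxy, norm_nonneg (x - T x)]
  · have hTxy : γ * ‖T x - T (T x)‖ ≤ ‖T x - y‖ + μ * ‖y - T y‖ := by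
      have h₃ := norm_sub_le_norm_sub_add_norm_sub x y (T x)
      rw [norm_sub_rev y (T x)] at h₃
      nlinarith [norm_nonneg (x - T x), norm_nonneg (y - T y)]
    linarith [hB.norm_sub_apply_le_of_le hμ hμγ (by linarith) (hT hx) hy hTxy]

theorem norm_apply_sub_le_of_apply_eq (hB : ConditionB γ μ C T) (hT : MapsTo T C C)
    (hγ : γ ≤ 1 / 2) (hμ : 0 ≤ μ) (hμγ : 2 * μ ≤ γ) {p : X} (hp : p ∈ C) (hTp : T p = p)
    (hy : y ∈ C) : ‖T y - p‖ ≤ ‖y - p‖ := by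
  simpa [hTp, norm_sub_rev] using hB.norm_sub_apply_le hT hγ hμ hμγ hp hy

theorem apply_eq_of_tendsto (hB : ConditionB γ μ C T) (hT : MapsTo T C C) (hγ : γ ≤ 1 / 2)
    (hμ : 0 ≤ μ) (hμγ : 2 * μ ≤ γ) {ι : Type*} {l : Filter ι} [l.NeBot] {u : ι → X}
    (huC : ∀ i, u i ∈ C) {v : X} (hv : v ∈ C) (hu : Tendsto u l (𝓝 v))
    (hTu : Tendsto (fun i => ‖u i - T (u i)‖) l (𝓝 0)) : T v = v := by
  have hbound : ∀ i, ‖v - T v‖ ≤ 2 * ‖u i - v‖ + 5 * ‖u i - T (u i)‖ := fun i => by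
    linarith [norm_sub_le_norm_sub_add_norm_sub v (u i) (T v), norm_sub_rev v (u i),
      hB.norm_sub_apply_le hT hγ hμ hμγ (huC i) hv]
  have hlim : Tendsto (fun i => 2 * ‖u i - v‖ + 5 * ‖u i - T (u i)‖) l (𝓝 0) := by
    simpa using ((tendsto_iff_norm_sub_tendsto_zero.1 hu).const_mul 2).add (hTu.const_mul 5)
  exact (sub_eq_zero.1 (norm_le_zero_iff.1 (ge_of_tendsto' hlim hbound))).symm

theorem tendsto_norm_iterate_sub_iterate_succ [NormedSpace ℝ X] [UniformConvexSpace X]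
    (hB : ConditionB γ μ C T) (hT : MapsTo T C C) (hC : Bornology.IsBounded C) (hγ₀ : 0 < γ)
    (hγ : γ ≤ 1) (hμ : 0 ≤ μ) (hμγ : 2 * μ ≤ γ) (hx : x ∈ C) :
    Tendsto (fun n => ‖T^[n] x - T^[n + 1] x‖) atTop (𝓝 0) := by
  set y : ℕ → X := fun n => T^[n] x
  have hys : ∀ n, y (n + 1) = T (y n) := fun n => Function.iterate_succ_apply' T n x
  have hyC : ∀ n, y n ∈ C := fun n => hT.iterate n hx
  set d : ℕ → ℝ := fun n => ‖y n - y (n + 1)‖ with hd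
  have hanti : Antitone d := antitone_nat_of_succ_le fun n => by
    simpa only [hd, hys] using hB.norm_apply_sub_apply_apply_le hT hγ hμ hμγ (hyC n)
  have hbdd : BddBelow (range d) := ⟨0, by rintro _ ⟨n, rfl⟩; exact norm_nonneg _⟩
  suffices hinf : ⨅ n, d n = 0 from hinf ▸ tendsto_atTop_ciInf hanti hbdd
  set δ := ⨅ n, d n
  by_contra hne
  have hδ : 0 < δ := (le_ciInf fun n => norm_nonneg _).lt_of_ne (Ne.symm hne)
  have hstep : ∀ n, d (n + 1) ≤ (1 - γ) * d n + μ * ‖y n - y (n + 2)‖ := fun n => by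
    have hpre : γ * ‖y n - T (y n)‖ ≤ ‖y n - y (n + 1)‖ + μ * ‖y (n + 1) - T (y (n + 1))‖ := by
      rw [← hys]
      nlinarith [norm_nonneg (y n - y (n + 1)), norm_nonneg (y (n + 1) - T (y (n + 1)))]
    simpa [← hys] using hB _ (hyC n) _ (hyC (n + 1)) hpre
  -- by uniform convexity, a step that differs from the next one forces `d` to drop
  have hsecond : Tendsto (fun n => (y n - y (n + 1)) - (y (n + 1) - y (n + 2))) atTop (𝓝 0) := by
    refine Metric.tendsto_nhds.2 fun ε hε => ?_
    obtain ⟨η, hη, huc⟩ := exists_forall_norm_add_le_two_sub_mul (E := X) hε (d 0)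
    have hdrop : 0 < (γ - 2 * μ + μ * η) * δ := by
      refine mul_pos ?_ hδ
      rcases hμ.eq_or_lt with rfl | hμ₀
      · simpa using hγ₀
      · nlinarith [mul_pos hμ₀ hη]
    refine (hanti.eventually_not_of_le_sub hbdd hdrop
      (P := fun n => ε ≤ ‖(y n - y (n + 1)) - (y (n + 1) - y (n + 2))‖) fun n hn => ?_).mono
      fun n hn => ?_
    · have hsum := huc (hanti (Nat.zero_le n)) le_rfl (hanti (Nat.le_succ n)) hn
      rw [sub_add_sub_cancel] at hsum
      have hδn : δ ≤ d n := ciInf_le hbdd n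
      nlinarith [hstep n, mul_le_mul_of_nonneg_left hsum hμ]
    · simpa using not_le.1 hn
  obtain ⟨n, hn⟩ := exists_norm_sub_succ_lt (hC.subset (range_subset_iff.2 hyC)) hsecond hδ
  exact hn.not_ge (ciInf_le hbdd n)

theorem exists_apply_eq [NormedSpace ℝ X] [UniformConvexSpace X] (hB : ConditionB γ μ C T)
    (hT : MapsTo T C C) (hC : IsCompact C) (hne : C.Nonempty) (hγ₀ : 0 < γ) (hγ : γ ≤ 1 / 2)
    (hμ : 0 ≤ μ) (hμγ : 2 * μ ≤ γ) : ∃ v ∈ C, T v = v := by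
  obtain ⟨p, hp⟩ := hne
  obtain ⟨v, hv, φ, hφ, hlim⟩ := hC.tendsto_subseq fun n => hT.iterate n hp
  refine ⟨v, hv, hB.apply_eq_of_tendsto hT hγ hμ hμγ (fun n => hT.iterate _ hp) hv hlim ?_⟩
  simpa only [Function.comp_def, Function.iterate_succ_apply'] using
    (hB.tendsto_norm_iterate_sub_iterate_succ hT hC.isBounded hγ₀ (by linarith) hμ hμγ
      hp).comp hφ.tendsto_atTop

theorem isCompact_setOf_apply_eq (hB : ConditionB γ μ C T) (hT : MapsTo T C C)
    (hC : IsCompact C) (hγ : γ ≤ 1 / 2) (hμ : 0 ≤ μ) (hμγ : 2 * μ ≤ γ) :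
    IsCompact {v ∈ C | T v = v} := by
  refine hC.of_isClosed_subset (isClosed_of_closure_subset fun v hv => ?_) (sep_subset _ _)
  obtain ⟨u, hu, hlim⟩ := mem_closure_iff_seq_limit.1 hv
  have hvC : v ∈ C := hC.isClosed.closure_subset_iff.2 (sep_subset _ _) hv
  exact ⟨hvC, hB.apply_eq_of_tendsto hT hγ hμ hμγ (fun n => (hu n).1) hvC hlim
    (by simp [(hu _).2])⟩

/-- The fixed-point set of one map is invariant under a map commuting with it, so common fixed
points are found one map at a time, each time inside the compact common fixed-point set of the
previous maps. -/
theorem exists_forall_apply_eq [NormedSpace ℝ X] [UniformConvexSpace X] {ι : Type*}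
    {s : Finset ι} {T : ι → X → X} (hB : ∀ i ∈ s, ConditionB γ μ C (T i))
    (hT : ∀ i ∈ s, MapsTo (T i) C C) (hcomm : ∀ i ∈ s, ∀ j ∈ s, ∀ x ∈ C, T i (T j x) = T j (T i x))
    (hC : IsCompact C) (hne : C.Nonempty) (hγ₀ : 0 < γ) (hγ : γ ≤ 1 / 2) (hμ : 0 ≤ μ)
    (hμγ : 2 * μ ≤ γ) : ∃ p ∈ C, ∀ i ∈ s, T i p = p := by
  classical
  suffices h : ∀ t ⊆ s, {p ∈ C | ∀ i ∈ t, T i p = p}.Nonempty ∧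
      IsCompact {p ∈ C | ∀ i ∈ t, T i p = p} from (h s subset_rfl).1
  intro t
  induction t using Finset.induction_on with
  | empty => simpa using ⟨hne, hC⟩
  | insert j t _ ih =>
    intro hts
    obtain ⟨hKne, hK⟩ := ih ((Finset.subset_insert j t).trans hts)
    set K := {p ∈ C | ∀ i ∈ t, T i p = p}
    have hjs : j ∈ s := hts (Finset.mem_insert_self j t)
    have hTK : MapsTo (T j) K K := fun p hp => ⟨hT j hjs hp.1, fun i hi => by
      rw [hcomm i (hts (Finset.mem_insert_of_mem hi)) j hjs p hp.1, hp.2 i hi]⟩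
    have hBK : ConditionB γ μ K (T j) := (hB j hjs).mono (sep_subset _ _)
    have heq : {p ∈ C | ∀ i ∈ insert j t, T i p = p} = {p ∈ K | T j p = p} := by
      ext p
      simp only [Finset.forall_mem_insert, mem_ofPred_eq, K]
      tauto
    rw [heq]
    exact ⟨hBK.exists_apply_eq hTK hK hKne hγ₀ hγ hμ hμγ,
      hBK.isCompact_setOf_apply_eq hTK hK hγ hμ hμγ⟩

theorem exists_tendsto_mannStep_iterate [NormedSpace ℝ X] [UniformConvexSpace X] {ι : Type*}
    {s : Finset ι} {T : ι → X → X} (hB : ∀ i ∈ s, ConditionB γ μ C (T i))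
    (hT : ∀ i ∈ s, MapsTo (T i) C C)
    (hC : IsCompact C) (hCc : Convex ℝ C) (hγ : γ ≤ 1 / 2) (hμ : 0 ≤ μ) (hμγ : 2 * μ ≤ γ)
    (hfix : ∃ p ∈ C, ∀ i ∈ s, T i p = p) {l : ℝ} (hl : l ∈ Ioo 0 1) {W : ℕ → ι → ℝ}
    (hW₀ : ∀ n, ∀ i ∈ s, 0 ≤ W n i) (hW₁ : ∀ n, ∑ i ∈ s, W n i = 1) {κ : ℝ} (hκ : 0 < κ)
    (hfreq : ∃ᶠ n in atTop, ∀ i ∈ s, κ ≤ W n i) {x : ℕ → X} (hx₀ : x 0 ∈ C)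
    (hx : ∀ n, x (n + 1) = mannStep s T l (W n) (x n)) :
    ∃ z ∈ C, (∀ i ∈ s, T i z = z) ∧ Tendsto x atTop (𝓝 z) := by
  have hxC : ∀ n, x n ∈ C := fun n => Nat.rec hx₀ (fun n hn => hx n ▸
    mannStep_mem hCc hT (hW₀ n) (hW₁ n) hl.1.le hl.2.le hn) n
  have hquasi : ∀ z ∈ C, (∀ i ∈ s, T i z = z) → ∀ n, ∀ i ∈ s, ‖T i (x n) - z‖ ≤ ‖x n - z‖ :=
    fun z hz hzfix n i hi =>
      (hB i hi).norm_apply_sub_le_of_apply_eq (hT i hi) hγ hμ hμγ hz (hzfix i hi) (hxC n)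
  obtain ⟨p, hpC, hpfix⟩ := hfix
  obtain ⟨φ, hφ, hφκ⟩ := extraction_of_frequently_atTop hfreq
  obtain ⟨z, hzC, ψ, hψ, hlim⟩ := hC.tendsto_subseq fun j => hxC (φ j)
  have hθ : Tendsto (φ ∘ ψ) atTop atTop := (hφ.comp hψ).tendsto_atTop
  have hzfix : ∀ i ∈ s, T i z = z := fun i hi =>
    (hB i hi).apply_eq_of_tendsto (hT i hi) hγ hμ hμγ (fun j => hxC _) hzC hlim <| by
      simpa only [norm_sub_rev, Function.comp_apply] using
        tendsto_norm_apply_sub_of_le_weight hx hW₀ hW₁ hl.1 hl.2 (hquasi p hpC hpfix) hi hκ hθ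
          fun j => hφκ (ψ j) i hi
  refine ⟨z, hzC, hzfix,
    tendsto_of_antitone_norm_sub (antitone_nat_of_succ_le fun n => ?_) hθ hlim⟩
  rw [hx n]
  exact norm_mannStep_sub_le (hW₀ n) (hW₁ n) hl.1.le hl.2.le (hquasi z hzC hzfix n)

end ConditionB

end

/-- The weight of `T k` in the iteration of the theorem: `a ^ (k - 1)` for `k ≥ 2`, and the
remaining mass for `k = 1`. -/
def powerWeight (L : ℕ) (a : ℝ) (k : ℕ) : ℝ :=
  if k = 1 then 1 - ∑ j ∈ Finset.Icc 1 (L - 1), a ^ j else a ^ (k - 1)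

theorem sum_Icc_two_pow_sub_one (a : ℝ) {L : ℕ} (hL : 1 ≤ L) :
    ∑ k ∈ Finset.Icc 2 L, a ^ (k - 1) = ∑ j ∈ Finset.Icc 1 (L - 1), a ^ j := by
  have hmap : Finset.Icc 2 L = (Finset.Icc 1 (L - 1)).map (addRightEmbedding 1) := by
    rw [Finset.map_add_right_Icc, Nat.sub_add_cancel hL]
  rw [hmap, Finset.sum_map]
  simp

theorem sum_Icc_one_half_pow (m : ℕ) :
    ∑ j ∈ Finset.Icc 1 m, (1 / 2 : ℝ) ^ j = 1 - (1 / 2) ^ m := by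
  induction m with
  | zero => simp
  | succ m ih => rw [Finset.sum_Icc_succ_top (by omega), ih]; ring

theorem sum_powerWeight_smul {M : Type*} [AddCommGroup M] [Module ℝ M] {L : ℕ} (hL : 1 ≤ L)
    (a : ℝ) (v : ℕ → M) :
    ∑ k ∈ Finset.Icc 1 L, powerWeight L a k • v k
      = (1 - ∑ j ∈ Finset.Icc 1 (L - 1), a ^ j) • v 1
        + ∑ k ∈ Finset.Icc 2 L, a ^ (k - 1) • v k := by
  rw [← Finset.insert_Icc_add_one_left_eq_Icc hL, Finset.sum_insert (by simp)]
  refine congrArg₂ _ (by simp [powerWeight]) (Finset.sum_congr rfl fun k hk => ?_)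
  rw [powerWeight, if_neg (by simp at hk; omega)]

theorem sum_powerWeight {L : ℕ} (hL : 1 ≤ L) (a : ℝ) :
    ∑ k ∈ Finset.Icc 1 L, powerWeight L a k = 1 := by
  simpa [sum_Icc_two_pow_sub_one a hL] using sum_powerWeight_smul hL a (fun _ => (1 : ℝ))

theorem pow_le_powerWeight {L k : ℕ} (hk : k ∈ Finset.Icc 1 L) {a b : ℝ} (hb : 0 ≤ b)
    (hba : b ≤ a) (ha : a ≤ 1 / 2) : b ^ (L - 1) ≤ powerWeight L a k := by
  obtain ⟨hk₁, hkL⟩ := Finset.mem_Icc.1 hk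
  unfold powerWeight
  split_ifs with h
  · calc b ^ (L - 1) ≤ (1 / 2) ^ (L - 1) := pow_le_pow_left₀ hb (hba.trans ha) _
      _ = 1 - ∑ j ∈ Finset.Icc 1 (L - 1), (1 / 2 : ℝ) ^ j := by rw [sum_Icc_one_half_pow]; ring
      _ ≤ 1 - ∑ j ∈ Finset.Icc 1 (L - 1), a ^ j := by
        gcongr with j
        exact hb.trans hba
  · calc b ^ (L - 1) ≤ b ^ (k - 1) := pow_le_pow_of_le_one hb (by linarith) (by omega)
      _ ≤ a ^ (k - 1) := pow_le_pow_left₀ hb hba _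

/-- For sufficiently small `γ`, the iteration for a finite family
`T 1, …, T l` of pairwise commuting maps satisfying condition `B_{γ,μ}` on a
compact convex subset of a uniformly convex Banach space converges strongly
to a common fixed point. -/
theorem condB_finite_commuting_convergence :
    ∃ γ₀ : ℝ, γ₀ ∈ Set.Ioc (0 : ℝ) 1 ∧
      ∀ (X : Type u) [NormedAddCommGroup X] [NormedSpace ℝ X] [CompleteSpace X]
        [UniformConvexSpace X]
        (C : Set X), C.Nonempty → Convex ℝ C → IsCompact C →
        ∀ L : ℕ, 2 ≤ L →
        ∀ γ μ : ℝ, γ ∈ Set.Ioc (0 : ℝ) γ₀ → μ ∈ Set.Icc (0 : ℝ) (1 / 2) →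
          2 * μ ≤ γ →
        ∀ T : ℕ → X → X,
          (∀ k, 1 ≤ k → k ≤ L → Set.MapsTo (T k) C C) →
          (∀ i j, 1 ≤ i → i ≤ L → 1 ≤ j → j ≤ L →
            ∀ x ∈ C, T i (T j x) = T j (T i x)) →
          (∀ k, 1 ≤ k → k ≤ L → ∀ x ∈ C, ∀ y ∈ C,
            γ * ‖x - T k x‖ ≤ ‖x - y‖ + μ * ‖y - T k y‖ →
              ‖T k x - T k y‖ ≤ (1 - γ) * ‖x - y‖
                + μ * (‖x - T k y‖ + ‖y - T k x‖)) →
        ∀ l : ℝ, l ∈ Set.Ioo (0 : ℝ) 1 →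
        ∀ α : ℕ → ℝ, (∀ n, α n ∈ Set.Icc (0 : ℝ) (1 / 2)) →
          Filter.liminf α Filter.atTop = 0 →
          0 < Filter.limsup α Filter.atTop →
          Filter.Tendsto (fun n => α (n + 1) - α n) Filter.atTop (nhds 0) →
        ∀ x : ℕ → X, x 0 ∈ C →
          (∀ n : ℕ, x (n + 1) =
            (l * (1 - ∑ k ∈ Finset.Icc 1 (L - 1), (α n) ^ k)) • T 1 (x n)
              + l • (∑ k ∈ Finset.Icc 2 L, (α n) ^ (k - 1) • T k (x n))
              + (1 - l) • x n) →
          ∃ z ∈ C, (∀ k, 1 ≤ k → k ≤ L → T k z = z) ∧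
            Filter.Tendsto x Filter.atTop (nhds z) := by
  refine ⟨1 / 2, ⟨by norm_num, by norm_num⟩, ?_⟩
  rintro X _ _ _ _ C hne hCc hC L hL γ μ ⟨hγ₀, hγ⟩ ⟨hμ, -⟩ hμγ T hT hcomm hB l hl α hα -
    hlimsup - x hx₀ hx
  have hL₁ : 1 ≤ L := by omega
  have hT' : ∀ k ∈ Finset.Icc 1 L, MapsTo (T k) C C := fun k hk =>
    hT k (Finset.mem_Icc.1 hk).1 (Finset.mem_Icc.1 hk).2
  have hB' : ∀ k ∈ Finset.Icc 1 L, ConditionB γ μ C (T k) := fun k hk =>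
    hB k (Finset.mem_Icc.1 hk).1 (Finset.mem_Icc.1 hk).2
  have hfix := ConditionB.exists_forall_apply_eq hB' hT' (fun i hi j hj => hcomm i j
    (Finset.mem_Icc.1 hi).1 (Finset.mem_Icc.1 hi).2 (Finset.mem_Icc.1 hj).1
    (Finset.mem_Icc.1 hj).2) hC hne hγ₀ hγ hμ hμγ
  -- `α n` exceeds half its `limsup` infinitely often, and then every weight is large
  have hfreq : ∃ᶠ n in atTop, ∀ k ∈ Finset.Icc 1 L,
      (limsup α atTop / 2) ^ (L - 1) ≤ powerWeight L (α n) k :=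
    (frequently_lt_of_lt_limsup (isCoboundedUnder_le_of_le atTop fun n => (hα n).1)
      (half_lt_self hlimsup)).mono fun n hn k hk =>
        pow_le_powerWeight hk (by positivity) hn.le (hα n).2
  obtain ⟨z, hzC, hzfix, hlim⟩ := ConditionB.exists_tendsto_mannStep_iterate hB' hT' hC hCc hγ hμ
    hμγ hfix hl (fun n k hk => (pow_nonneg le_rfl _).trans (pow_le_powerWeight hk le_rfl
      (hα n).1 (hα n).2)) (fun n => sum_powerWeight hL₁ _) (by positivity) hfreq hx₀
    fun n => by rw [hx n, mannStep, sum_powerWeight_smul hL₁, smul_add, smul_smul]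
  exact ⟨z, hzC, fun k hk₁ hkL => hzfix k (Finset.mem_Icc.2 ⟨hk₁, hkL⟩), hlim⟩
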